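/- Let V ⊆ ℝ_max^4 be the max-plus cone generated by the four vectors v^r = (r, 2r, 3r, 4r) for r = 1, 2, 3, 4. For every real number δ with −1 < δ < 0, the half-space {x ∈ ℝ_max^4 : max(6 + x_2, δ + x_4) ≤ max(8 + x_1, δ + 4 + x_3)} is minimal with respect to V. Consequently, the set of half-spaces that are minimal with respect to V is infinite. -/

import Mathlib

noncomputable section

/-- The max-plus (tropical) semiring `ℝ ∪ {-∞}`:
addition is `max`, multiplication is `+` (with `-∞` absorbing). -/
abbrev Rmax : Type := WithBot ℝ

/-- A max-plus (tropical) cone: a set stable under max-plus linear combinations. -/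
def IsTropCone {ι : Type} (V : Set (ι → Rmax)) : Prop :=
  ∀ u ∈ V, ∀ w ∈ V, ∀ lam mu : Rmax, (fun i => max (lam + u i) (mu + w i)) ∈ V

/-- `tropCone X`: the set of all max-plus linear combinations of finitely many
elements of `X`. -/
def tropCone {ι : Type} (X : Set (ι → Rmax)) : Set (ι → Rmax) :=
  {x | ∃ (m : ℕ) (lam : Fin m → Rmax) (w : Fin m → ι → Rmax),
        (∀ s, w s ∈ X) ∧ x = fun i => Finset.univ.sup (fun s => lam s + w s i)}

/-- `tropCo X`: max-plus convex combinations (coefficients with maximum `0 = 𝟙`)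
of finitely many elements of `X`. -/
def tropCo {ι : Type} (X : Set (ι → Rmax)) : Set (ι → Rmax) :=
  {x | ∃ (m : ℕ) (lam : Fin m → Rmax) (w : Fin m → ι → Rmax),
        (∀ s, w s ∈ X) ∧ Finset.univ.sup lam = (0 : Rmax) ∧
        x = fun i => Finset.univ.sup (fun s => lam s + w s i)}

/-- Max-plus Minkowski sum of two subsets. -/
def tropSum {ι : Type} (A B : Set (ι → Rmax)) : Set (ι → Rmax) :=
  {z | ∃ a ∈ A, ∃ b ∈ B, z = fun i => max (a i) (b i)}

/-- A half-space of `ℝ_max^ι`. -/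
def IsHalfSpace {ι : Type} [Fintype ι] (H : Set (ι → Rmax)) : Prop :=
  ∃ a b : ι → Rmax,
    H = {x | Finset.univ.sup (fun i => a i + x i) ≤ Finset.univ.sup (fun j => b j + x j)}

/-- An affine half-space of `ℝ_max^ι`. -/
def IsAffineHalfSpace {ι : Type} [Fintype ι] (H : Set (ι → Rmax)) : Prop :=
  ∃ (a b : ι → Rmax) (c d : Rmax),
    H = {x | max (Finset.univ.sup (fun i => a i + x i)) c ≤
             max (Finset.univ.sup (fun j => b j + x j)) d}

/-- A max-plus polyhedron: an intersection of finitely many affine half-spaces. -/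
def IsPolyhedron {ι : Type} [Fintype ι] (C : Set (ι → Rmax)) : Prop :=
  ∃ (m : ℕ) (H : Fin m → Set (ι → Rmax)),
    (∀ k, IsAffineHalfSpace (H k)) ∧ C = ⋂ k, H k

/-- The recession cone of a max-plus convex set. -/
def recessionCone {ι : Type} (C : Set (ι → Rmax)) : Set (ι → Rmax) :=
  {u | ∃ x ∈ C, ∀ lam : Rmax, (fun i => max (x i) (lam + u i)) ∈ C}

/-- A half-space minimal (for inclusion) among the half-spaces containing `V`. -/
def IsMinimalHalfSpace {ι : Type} [Fintype ι] (V H : Set (ι → Rmax)) : Prop :=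
  IsHalfSpace H ∧ V ⊆ H ∧ ¬ ∃ H', IsHalfSpace H' ∧ V ⊆ H' ∧ H' ⊂ H

/-- The half-space written in normal form: `max_{i ∈ I} (a i + x i) ≤ max_{j ∈ J} (a j + x j)`
(the sup over an empty index set being `⊥ = -∞`). -/
def halfSpace {ι : Type} (I J : Finset ι) (a : ι → ℝ) : Set (ι → Rmax) :=
  {x | I.sup (fun i => ((a i : Rmax)) + x i) ≤ J.sup (fun j => ((a j : Rmax)) + x j)}

/-- The max-plus cone generated by the vectors `v 0, …, v (p-1)` (finite entries). -/
def genCone {ι : Type} [Fintype ι] {p : ℕ} (v : Fin p → ι → ℝ) : Set (ι → Rmax) :=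
  {x | ∃ lam : Fin p → Rmax, x = fun i => Finset.univ.sup (fun r => lam r + ((v r i : Rmax)))}

/-- `S_j(x)`: the `j`-th component of the type of `x` relative to the generators `v`. -/
def typeSet {ι : Type} {p : ℕ} (v : Fin p → ι → ℝ) (x : ι → ℝ) (j : ι) : Set (Fin p) :=
  {r | v r j - x j = ⨆ k, (v r k - x k)}

/-- `V` has full support. -/
def HasFullSupport {ι : Type} (V : Set (ι → Rmax)) : Prop :=
  ∀ k : ι, ∃ v ∈ V, v k ≠ ⊥

/-- `x` is a vertex of the natural cell decomposition induced by the generators `v`: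
the cell of `type(x)` consists exactly of the (finite) scalar multiples of `x`. -/
def IsVertex {ι : Type} {p : ℕ} (v : Fin p → ι → ℝ) (x : ι → ℝ) : Prop :=
  {y : ι → ℝ | ∀ j, typeSet v x j ⊆ typeSet v y j} = {y | ∃ c : ℝ, y = fun i => c + x i}

/-- The `i`-th max-plus unit vector. -/
def unitVec {ι : Type} [DecidableEq ι] (i : ι) : ι → Rmax :=
  fun k => if k = i then (0 : Rmax) else ⊥

/-- The vector `⊕_{j ∈ J} b j ⊙ e^j`. -/
def jVec {ι : Type} [DecidableEq ι] (J : Finset ι) (b : ι → ℝ) : ι → Rmax :=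
  fun k => if k ∈ J then ((b k : Rmax)) else ⊥

/-- The polar of a max-plus cone: the set of (pairs defining) half-spaces containing it. -/
def polar {ι : Type} [Fintype ι] (V : Set (ι → Rmax)) : Set ((ι → Rmax) × (ι → Rmax)) :=
  {q | ∀ x ∈ V, Finset.univ.sup (fun i => q.1 i + x i) ≤ Finset.univ.sup (fun j => q.2 j + x j)}

/-- Extreme vector of a max-plus cone of pairs (e.g. the polar). -/
def IsExtremePair {ι : Type} (W : Set ((ι → Rmax) × (ι → Rmax)))
    (z : (ι → Rmax) × (ι → Rmax)) : Prop :=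
  z ∈ W ∧ z ≠ (fun _ => (⊥ : Rmax), fun _ => (⊥ : Rmax)) ∧
    ∀ u ∈ W, ∀ w ∈ W,
      z = (fun i => max (u.1 i) (w.1 i), fun i => max (u.2 i) (w.2 i)) → z = u ∨ z = w

/-- Extreme point of a max-plus convex set. -/
def IsExtremePoint {ι : Type} (C : Set (ι → Rmax)) (z : ι → Rmax) : Prop :=
  z ∈ C ∧ ∀ u ∈ C, ∀ w ∈ C, ∀ lam mu : Rmax, max lam mu = (0 : Rmax) →
    z = (fun i => max (lam + u i) (mu + w i)) → z = u ∨ z = w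

/-- Extreme vector of a max-plus cone. -/
def IsExtremeVector {ι : Type} (W : Set (ι → Rmax)) (z : ι → Rmax) : Prop :=
  z ∈ W ∧ z ≠ (fun _ => (⊥ : Rmax)) ∧
    ∀ u ∈ W, ∀ w ∈ W, z = (fun i => max (u i) (w i)) → z = u ∨ z = w

/-- Projection of a subset of `ℝ_max^ι` onto the coordinates indexed by `K`. -/
def projCone {ι : Type} (K : Finset ι) (V : Set (ι → Rmax)) :
    Set ({k : ι // k ∈ K} → Rmax) :=
  {y | ∃ x ∈ V, y = fun k => x k.1}

/-- The generators of the counter-example: `v^r = (r, 2r, 3r, 4r)`, `r = 1,…,4`. -/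
def v4 : Fin 4 → Fin 4 → ℝ := fun r i => ((r : ℕ) + 1) * ((i : ℕ) + 1)

/-!
Let `S = {x | a x ≤ b x}` be a half-space with `V ⊆ S ⊆ H_δ` (`H_δ = deltaHalfSpace δ`). Since
`e₁, e₃ ∉ H_δ`, we have `b₁ < a₁` and `b₃ < a₃`. The complement of `S` is closed under `⊕`, so
when a rescaled generator `vʳ = v4 (r - 1)` splits as `g ⊕ z` with `z ∉ H_δ`, the point `g` lies
in `S`: the splittings `v² - 2 = (0, 2, -∞, -∞) ⊕ (-∞, 2, 4, 6)` and
`v⁴ - 12 = (-∞, -∞, 0, 4) ⊕ (-8, -4, -∞, 4)` give `a₀ ⊕ (a₁ + 2) ≤ b₀` and `a₂ ⊕ (a₃ + 4) ≤ b₂`.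
Conversely the points `(-∞, b₂ - a₁, 0, -∞)` and `(0, -∞, -∞, b₀ - a₃)` lie in `S`, hence in
`H_δ`, so `b₂ ≤ a₁ + δ - 2` and `b₀ ≤ a₃ + 8 - δ`. Together these force
`b₀ = a₁ + 2 = a₃ + 8 - δ` and `b₂ = a₃ + 4 = a₁ + δ - 2`, which is what makes each of the two
inequalities defining `H_δ` imply `a x ≤ b x`.
-/

theorem sup_le_of_sup_le_sup_of_lt {α : Type*} [LinearOrder α] {x y u w : α}
    (h : x ⊔ y ≤ u ⊔ w) (hw : w < y) : x ⊔ y ≤ u := by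
  have hy : y ≤ u := (le_max_iff.1 (le_sup_right.trans h)).resolve_right hw.not_ge
  rwa [max_eq_left (hw.le.trans hy)] at h

def tropDot {ι : Type} [Fintype ι] (a x : ι → Rmax) : Rmax :=
  Finset.univ.sup fun i => a i + x i

def tropHalfSpace {ι : Type} [Fintype ι] (a b : ι → Rmax) : Set (ι → Rmax) :=
  {x | tropDot a x ≤ tropDot b x}

section HalfSpace

variable {ι : Type} [Fintype ι] {a b c d : ι → Rmax}

theorem isHalfSpace_tropHalfSpace (a b : ι → Rmax) : IsHalfSpace (tropHalfSpace a b) :=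
  ⟨a, b, rfl⟩

theorem tropDot_sup (a x y : ι → Rmax) : tropDot a (x ⊔ y) = tropDot a x ⊔ tropDot a y := by
  rw [tropDot, tropDot, tropDot, ← Finset.sup_sup]
  congr 1
  funext i
  exact (max_add_add_left _ _ _).symm

theorem tropDot_bot (a : ι → Rmax) : tropDot a ⊥ = ⊥ := by
  simp [tropDot]

theorem tropDot_const_add (a x : ι → Rmax) (c : Rmax) :
    tropDot a (fun i => c + x i) = c + tropDot a x := by
  rw [tropDot, tropDot, Finset.apply_sup_eq_sup_comp (c + ·)
    (fun _ _ => (max_add_add_left _ _ _).symm) (WithBot.add_bot c)]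
  simp only [Function.comp_def, add_left_comm]

theorem bot_mem_tropHalfSpace : ⊥ ∈ tropHalfSpace a b := by
  simp [tropHalfSpace, tropDot_bot]

theorem sup_mem_tropHalfSpace {x y : ι → Rmax} (hx : x ∈ tropHalfSpace a b)
    (hy : y ∈ tropHalfSpace a b) : x ⊔ y ∈ tropHalfSpace a b := by
  simp only [tropHalfSpace, Set.mem_ofPred_eq, tropDot_sup] at hx hy ⊢
  exact sup_le_sup hx hy

theorem const_add_mem_tropHalfSpace {x : ι → Rmax} (c : Rmax) (hx : x ∈ tropHalfSpace a b) :
    (fun i => c + x i) ∈ tropHalfSpace a b := by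
  simp only [tropHalfSpace, Set.mem_ofPred_eq, tropDot_const_add] at hx ⊢
  exact add_le_add_right hx c

theorem mem_or_mem_of_sup_mem_tropHalfSpace {x y : ι → Rmax}
    (h : x ⊔ y ∈ tropHalfSpace a b) :
    x ∈ tropHalfSpace a b ∨ y ∈ tropHalfSpace a b := by
  by_contra! hxy
  simp only [tropHalfSpace, Set.mem_ofPred_eq, not_le, tropDot_sup] at hxy h
  exact h.not_gt (max_lt_max hxy.1 hxy.2)

theorem mem_tropHalfSpace_of_sup_mem {x y : ι → Rmax}
    {M : Set (ι → Rmax)} (hM : tropHalfSpace a b ⊆ M) (h : x ⊔ y ∈ tropHalfSpace a b)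
    (hy : y ∉ M) : x ∈ tropHalfSpace a b :=
  (mem_or_mem_of_sup_mem_tropHalfSpace h).resolve_right fun hy' => hy (hM hy')

theorem tropHalfSpace_subset_tropHalfSpace
    (h : ∀ i, a i ≤ b i ∨ (c i ≠ ⊥ ∧ ∀ j, a i + d j ≤ b j + c i)) :
    tropHalfSpace c d ⊆ tropHalfSpace a b := by
  intro x hx
  simp only [tropHalfSpace, Set.mem_ofPred_eq, tropDot] at hx ⊢
  refine Finset.sup_le fun i _ => ?_
  rcases h i with hab | ⟨hc, hacd⟩
  · exact Finset.le_sup_of_le (f := fun j => b j + x j) (Finset.mem_univ i)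
      (add_le_add_left hab _)
  · obtain ⟨j, -, hj⟩ := Finset.exists_mem_eq_sup Finset.univ ⟨i, Finset.mem_univ i⟩
      (fun j => d j + x j)
    have hi : c i + x i ≤ d j + x j :=
      hj ▸ (Finset.le_sup (f := fun i => c i + x i) (Finset.mem_univ i)).trans hx
    refine Finset.le_sup_of_le (f := fun j => b j + x j) (Finset.mem_univ j) ?_
    rw [← WithBot.add_le_add_iff_right hc]
    calc a i + x i + c i = a i + (c i + x i) := by ac_rfl
      _ ≤ a i + (d j + x j) := add_le_add_right hi _
      _ = a i + d j + x j := by ac_rfl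
      _ ≤ b j + c i + x j := add_le_add_left (hacd j) _
      _ = b j + x j + c i := by ac_rfl

theorem coe_mem_genCone {p : ℕ} (v : Fin p → ι → ℝ) (r : Fin p) :
    (fun i => (v r i : Rmax)) ∈ genCone v := by
  refine ⟨fun s => if s = r then 0 else ⊥, funext fun i => le_antisymm
    (Finset.le_sup_of_le (Finset.mem_univ r) (by simp)) (Finset.sup_le fun s _ => ?_)⟩
  by_cases hs : s = r <;> simp [hs]

theorem genCone_subset_tropHalfSpace {p : ℕ} {v : Fin p → ι → ℝ}
    (h : ∀ r, (fun i => (v r i : Rmax)) ∈ tropHalfSpace a b) :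
    genCone v ⊆ tropHalfSpace a b := by
  rintro _ ⟨lam, rfl⟩
  have hsup := Finset.sup_mem _ bot_mem_tropHalfSpace
    (fun _ hx _ hy => sup_mem_tropHalfSpace hx hy) Finset.univ (fun r i => lam r + (v r i : Rmax))
    fun r _ => const_add_mem_tropHalfSpace (lam r) (h r)
  convert hsup using 1
  funext i
  rw [Finset.sup_apply]

end HalfSpace

theorem tropDot_fin_four (a x : Fin 4 → Rmax) :
    tropDot a x = (a 0 + x 0) ⊔ (a 1 + x 1) ⊔ (a 2 + x 2) ⊔ (a 3 + x 3) := by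
  have : (Finset.univ : Finset (Fin 4)) = {0, 1, 2, 3} := rfl
  simp [tropDot, this, sup_assoc]

def deltaHalfSpace (δ : ℝ) : Set (Fin 4 → Rmax) :=
  {x | max (((6 : ℝ) : Rmax) + x 1) ((δ : Rmax) + x 3) ≤
    max (((8 : ℝ) : Rmax) + x 0) (((δ + 4 : ℝ) : Rmax) + x 2)}

theorem deltaHalfSpace_eq_tropHalfSpace (δ : ℝ) : deltaHalfSpace δ =
    tropHalfSpace ![⊥, (6 : ℝ), ⊥, δ] ![(8 : ℝ), ⊥, (δ + 4 : ℝ), ⊥] := by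
  ext x
  simp only [tropHalfSpace, tropDot_fin_four, Set.mem_ofPred_eq, Matrix.cons_val,
    WithBot.bot_add, bot_sup_eq, sup_bot_eq]
  rfl

theorem genCone_v4_subset_deltaHalfSpace {δ : ℝ} (hδ₁ : -1 < δ) (hδ : δ < 0) :
    genCone v4 ⊆ deltaHalfSpace δ := by
  rw [deltaHalfSpace_eq_tropHalfSpace]
  refine genCone_subset_tropHalfSpace fun r => ?_
  rw [← deltaHalfSpace_eq_tropHalfSpace]
  fin_cases r <;>
    simp only [deltaHalfSpace, Set.mem_ofPred_eq, ← WithBot.coe_add, ← WithBot.coe_max,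
      WithBot.coe_le_coe, v4] <;> norm_num <;> grind

section Minimality

variable {δ : ℝ} {a b : Fin 4 → Rmax}

theorem coeff_lt_of_subset_deltaHalfSpace (hH : tropHalfSpace a b ⊆ deltaHalfSpace δ) :
    b 1 < a 1 ∧ b 3 < a 3 := by
  constructor <;> by_contra! hab
  · have he : (![⊥, (0 : ℝ), ⊥, ⊥] : Fin 4 → Rmax) ∈ tropHalfSpace a b := by
      simpa only [tropHalfSpace, Set.mem_ofPred_eq, tropDot_fin_four, Matrix.cons_val,
        WithBot.add_bot, WithBot.coe_zero, add_zero, bot_sup_eq, sup_bot_eq] using hab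
    simpa [deltaHalfSpace] using hH he
  · have he : (![⊥, ⊥, ⊥, (0 : ℝ)] : Fin 4 → Rmax) ∈ tropHalfSpace a b := by
      simpa only [tropHalfSpace, Set.mem_ofPred_eq, tropDot_fin_four, Matrix.cons_val,
        WithBot.add_bot, WithBot.coe_zero, add_zero, bot_sup_eq, sup_bot_eq] using hab
    simpa [deltaHalfSpace] using hH he

theorem sup_le_coeff_zero_of_subset_deltaHalfSpace (hδ : δ < 0)
    (hV : genCone v4 ⊆ tropHalfSpace a b) (hH : tropHalfSpace a b ⊆ deltaHalfSpace δ) :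
    a 0 ⊔ (a 1 + (2 : ℝ)) ≤ b 0 := by
  have hv : (![(0 : ℝ), (2 : ℝ), ⊥, ⊥] : Fin 4 → Rmax) ⊔
      ![⊥, (2 : ℝ), (4 : ℝ), (6 : ℝ)] ∈ tropHalfSpace a b := by
    convert const_add_mem_tropHalfSpace ((-2 : ℝ) : Rmax) (hV (coe_mem_genCone v4 1)) using 1
    funext i
    fin_cases i <;> norm_num [v4, ← WithBot.coe_add, -WithBot.coe_ofNat]
  have hg := mem_tropHalfSpace_of_sup_mem hH hv (by
    simp only [deltaHalfSpace, Set.mem_ofPred_eq, Matrix.cons_val, WithBot.add_bot,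
      ← WithBot.coe_add, max_bot_left, ← WithBot.coe_max, WithBot.coe_le_coe, not_le]
    grind)
  simp only [tropHalfSpace, tropDot_fin_four, Set.mem_ofPred_eq, Matrix.cons_val, WithBot.add_bot,
    sup_bot_eq, WithBot.coe_zero, add_zero] at hg
  exact sup_le_of_sup_le_sup_of_lt hg
    (WithBot.add_lt_add_right WithBot.coe_ne_bot (coeff_lt_of_subset_deltaHalfSpace hH).1)

theorem sup_le_coeff_two_of_subset_deltaHalfSpace (hV : genCone v4 ⊆ tropHalfSpace a b)
    (hH : tropHalfSpace a b ⊆ deltaHalfSpace δ) : a 2 ⊔ (a 3 + (4 : ℝ)) ≤ b 2 := by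
  have hv : (![⊥, ⊥, (0 : ℝ), (4 : ℝ)] : Fin 4 → Rmax) ⊔
      ![(-8 : ℝ), (-4 : ℝ), ⊥, (4 : ℝ)] ∈ tropHalfSpace a b := by
    convert const_add_mem_tropHalfSpace ((-12 : ℝ) : Rmax) (hV (coe_mem_genCone v4 3)) using 1
    funext i
    fin_cases i <;> norm_num [v4, ← WithBot.coe_add, -WithBot.coe_ofNat]
  have hg := mem_tropHalfSpace_of_sup_mem hH hv (by
    simp only [deltaHalfSpace, Set.mem_ofPred_eq, Matrix.cons_val, WithBot.add_bot,
      ← WithBot.coe_add, max_bot_right, ← WithBot.coe_max, WithBot.coe_le_coe, not_le]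
    grind)
  simp only [tropHalfSpace, tropDot_fin_four, Set.mem_ofPred_eq, Matrix.cons_val, WithBot.add_bot,
    bot_sup_eq, WithBot.coe_zero, add_zero] at hg
  exact sup_le_of_sup_le_sup_of_lt hg
    (WithBot.add_lt_add_right WithBot.coe_ne_bot (coeff_lt_of_subset_deltaHalfSpace hH).2)

theorem coeff_two_le_of_subset_deltaHalfSpace (hH : tropHalfSpace a b ⊆ deltaHalfSpace δ)
    (h2 : a 2 ≤ b 2) {A1 B2 : ℝ} (ha : a 1 = A1) (hb : b 2 = B2) : B2 ≤ A1 + δ - 2 := by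
  have hp : (![⊥, (B2 - A1 : ℝ), (0 : ℝ), ⊥] : Fin 4 → Rmax) ∈ tropHalfSpace a b := by
    simp only [tropHalfSpace, Set.mem_ofPred_eq, tropDot_fin_four, Matrix.cons_val,
      WithBot.add_bot, WithBot.coe_zero, add_zero, bot_sup_eq, sup_bot_eq, ha, hb,
      ← WithBot.coe_add, add_sub_cancel]
    exact sup_le le_sup_right ((hb ▸ h2).trans le_sup_right)
  have hm := hH hp
  simp only [deltaHalfSpace, Set.mem_ofPred_eq, Matrix.cons_val, WithBot.add_bot,
    ← WithBot.coe_add, max_bot_left, max_bot_right, WithBot.coe_le_coe] at hm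
  linarith

theorem coeff_zero_le_of_subset_deltaHalfSpace (hH : tropHalfSpace a b ⊆ deltaHalfSpace δ)
    (h0 : a 0 ≤ b 0) {A3 B0 : ℝ} (ha : a 3 = A3) (hb : b 0 = B0) : B0 ≤ A3 + 8 - δ := by
  have hp : (![(0 : ℝ), ⊥, ⊥, (B0 - A3 : ℝ)] : Fin 4 → Rmax) ∈ tropHalfSpace a b := by
    simp only [tropHalfSpace, Set.mem_ofPred_eq, tropDot_fin_four, Matrix.cons_val,
      WithBot.add_bot, WithBot.coe_zero, add_zero, sup_bot_eq, ha, hb,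
      ← WithBot.coe_add, add_sub_cancel]
    exact sup_le ((hb ▸ h0).trans le_sup_left) le_sup_left
  have hm := hH hp
  simp only [deltaHalfSpace, Set.mem_ofPred_eq, Matrix.cons_val, WithBot.add_bot,
    ← WithBot.coe_add, max_bot_left, max_bot_right, WithBot.coe_le_coe] at hm
  linarith

theorem deltaHalfSpace_subset_of_genCone_subset (hδ : δ < 0)
    (hV : genCone v4 ⊆ tropHalfSpace a b) (hH : tropHalfSpace a b ⊆ deltaHalfSpace δ) :
    deltaHalfSpace δ ⊆ tropHalfSpace a b := by
  obtain ⟨hba1, hba3⟩ := coeff_lt_of_subset_deltaHalfSpace hH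
  obtain ⟨hab0, ha1b0⟩ := sup_le_iff.1 (sup_le_coeff_zero_of_subset_deltaHalfSpace hδ hV hH)
  obtain ⟨hab2, ha3b2⟩ := sup_le_iff.1 (sup_le_coeff_two_of_subset_deltaHalfSpace hV hH)
  obtain ⟨A1, hA1⟩ := WithBot.ne_bot_iff_exists.1 hba1.ne_bot
  obtain ⟨A3, hA3⟩ := WithBot.ne_bot_iff_exists.1 hba3.ne_bot
  rw [← hA1, ← WithBot.coe_add] at ha1b0
  rw [← hA3, ← WithBot.coe_add] at ha3b2
  obtain ⟨B0, hB0, hAB0⟩ := WithBot.coe_le_iff.1 ha1b0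
  obtain ⟨B2, hB2, hAB2⟩ := WithBot.coe_le_iff.1 ha3b2
  have hB2A1 := coeff_two_le_of_subset_deltaHalfSpace hH hab2 hA1.symm hB2
  have hB0A3 := coeff_zero_le_of_subset_deltaHalfSpace hH hab0 hA3.symm hB0
  rw [deltaHalfSpace_eq_tropHalfSpace]
  refine tropHalfSpace_subset_tropHalfSpace fun i => ?_
  fin_cases i
  · exact .inl hab0
  · refine .inr ⟨WithBot.coe_ne_bot, fun j => ?_⟩
    fin_cases j <;> simp only [Fin.reduceFinMk, Matrix.cons_val, ← hA1, hB0, hB2, WithBot.add_bot,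
      bot_le, ← WithBot.coe_add, WithBot.coe_le_coe] <;> linarith
  · exact .inl hab2
  · refine .inr ⟨WithBot.coe_ne_bot, fun j => ?_⟩
    fin_cases j <;> simp only [Fin.reduceFinMk, Matrix.cons_val, ← hA3, hB0, hB2, WithBot.add_bot,
      bot_le, ← WithBot.coe_add, WithBot.coe_le_coe] <;> linarith

theorem isMinimalHalfSpace_deltaHalfSpace {δ : ℝ} (hδ₁ : -1 < δ) (hδ : δ < 0) :
    IsMinimalHalfSpace (genCone v4) (deltaHalfSpace δ) := by
  refine ⟨deltaHalfSpace_eq_tropHalfSpace δ ▸ isHalfSpace_tropHalfSpace _ _,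
    genCone_v4_subset_deltaHalfSpace hδ₁ hδ, ?_⟩
  rintro ⟨_, ⟨a, b, rfl⟩, hV, hH⟩
  exact hH.2 (deltaHalfSpace_subset_of_genCone_subset hδ hV hH.1)

theorem deltaHalfSpace_injective : Function.Injective deltaHalfSpace := by
  have key : ∀ δ t : ℝ,
      (![(0 : ℝ), ⊥, ⊥, t] : Fin 4 → Rmax) ∈ deltaHalfSpace δ ↔ δ + t ≤ 8 := by
    intro δ t
    simp only [deltaHalfSpace, Set.mem_ofPred_eq, Matrix.cons_val, WithBot.add_bot,
      ← WithBot.coe_add, max_bot_left, max_bot_right, WithBot.coe_le_coe, add_zero]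
  intro p q hpq
  have hp := (key q (8 - p)).1 (hpq ▸ (key p (8 - p)).2 (by linarith))
  have hq := (key p (8 - q)).1 (hpq.symm ▸ (key q (8 - q)).2 (by linarith))
  linarith

end Minimality

/-- an infinite family of minimal half-spaces. -/
theorem stmt_13 :
    (∀ δ : ℝ, -1 < δ → δ < 0 →
      IsMinimalHalfSpace (genCone v4)
        {x : Fin 4 → Rmax |
          max (((6 : ℝ) : Rmax) + x 1) ((δ : Rmax) + x 3) ≤
            max (((8 : ℝ) : Rmax) + x 0) (((δ + 4 : ℝ) : Rmax) + x 2)}) ∧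
    {H : Set (Fin 4 → Rmax) | IsMinimalHalfSpace (genCone v4) H}.Infinite :=
  ⟨fun _ h1 h2 => isMinimalHalfSpace_deltaHalfSpace h1 h2,
    ((Set.Ioo_infinite (by norm_num : (-1 : ℝ) < 0)).image deltaHalfSpace_injective.injOn).mono
      (Set.image_subset_iff.2 fun _ hδ => isMinimalHalfSpace_deltaHalfSpace hδ.1 hδ.2)⟩
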